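/- arXiv:1808.09067 — 2 statements merged into one kernel-verified Lean document; each statement's English description precedes it below -/
import Mathlib

section
/- Truncated De Rham–Saito division: let α = Σ_i a_i·dx_i/x_i + Σ_j b_j·dy_j be a 0-final dominant logarithmic 1-form (equivalently, ν_A(α) = 0 and at least one a_i is a unit of R). Let ρ ∈ ℝ and let β be a logarithmic 1-form with ν_A(α ∧ β) ≥ ρ. Then there exist H ∈ R and a logarithmic 1-form β̃ with ν_A(β̃) ≥ ρ such that β = H·α + β̃. -/
noncomputable section
open MvPowerSeries Classical

section Core

variable {k : Type} [Field k] {σ : Type}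

/-- Weighted value of an exponent. -/
def wtG (W : σ → ℝ) (e : σ →₀ ℕ) : ℝ := e.sum fun i m => (m : ℝ) * W i

/-- Explicit value of a formal power series. -/
def nuG (W : σ → ℝ) (f : MvPowerSeries σ k) : EReal :=
  sInf {v : EReal | ∃ e : σ →₀ ℕ, MvPowerSeries.coeff (R := k) e f ≠ 0 ∧ v = ((wtG W e : ℝ) : EReal)}

/-- Derivative operators: `x·∂/∂x` for logarithmic variables, `∂/∂y` for plain ones. -/
def DopG (isLog : σ → Bool) (b : σ) (f : MvPowerSeries σ k) : MvPowerSeries σ k :=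
  fun e => if isLog b then (e b : k) * MvPowerSeries.coeff (R := k) e f
    else ((e b : k) + 1) * MvPowerSeries.coeff (R := k) (e + Finsupp.single b 1) f

/-- The differential of a function as a logarithmic 1-form. -/
def dFnG (isLog : σ → Bool) (f : MvPowerSeries σ k) : σ → MvPowerSeries σ k :=
  fun b => DopG isLog b f

/-- Explicit value of a logarithmic 1-form. -/
def nu1G (W : σ → ℝ) (ω : σ → MvPowerSeries σ k) : EReal := ⨅ b, nuG W (ω b)

/-- Wedge of two 1-forms, as an alternating 2-tensor. -/
def w2G (α β : σ → MvPowerSeries σ k) : σ → σ → MvPowerSeries σ k :=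
  fun a b => α a * β b - α b * β a

/-- Exterior derivative of a 1-form, as an alternating 2-tensor. -/
def dF1G (isLog : σ → Bool) (ω : σ → MvPowerSeries σ k) : σ → σ → MvPowerSeries σ k :=
  fun a b => DopG isLog a (ω b) - DopG isLog b (ω a)

/-- Explicit value of a 2-form. -/
def nu2G (W : σ → ℝ) (Ω : σ → σ → MvPowerSeries σ k) : EReal := ⨅ a, ⨅ b, nuG W (Ω a b)

/-- Wedge of a 1-form with a 2-form, as an alternating 3-tensor. -/
def w12G (θ : σ → MvPowerSeries σ k) (Ω : σ → σ → MvPowerSeries σ k) :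
    σ → σ → σ → MvPowerSeries σ k :=
  fun a b c => θ a * Ω b c - θ b * Ω a c + θ c * Ω a b

/-- Explicit value of a 3-form. -/
def nu3G (W : σ → ℝ) (T : σ → σ → σ → MvPowerSeries σ k) : EReal :=
  ⨅ a, ⨅ b, ⨅ c, nuG W (T a b c)

/-- `f` is dominant at its own explicit value: the value is realized by a monomial
purely in the distinguished (`isX`) variables. -/
def DomAtG (W : σ → ℝ) (isX : σ → Prop) (f : MvPowerSeries σ k) : Prop :=
  ∃ e : σ →₀ ℕ, (∀ i, ¬ isX i → e i = 0) ∧ MvPowerSeries.coeff (R := k) e f ≠ 0 ∧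
    ((wtG W e : ℝ) : EReal) = nuG W f

/-- `f` is `γ`-final dominant. -/
def FinalDomFnG (W : σ → ℝ) (isX : σ → Prop) (γ : ℝ) (f : MvPowerSeries σ k) : Prop :=
  nuG W f ≤ (γ : EReal) ∧ DomAtG W isX f

/-- A 1-form is dominant at its own explicit value: realized by a `dx_i/x_i`-coefficient. -/
def Dom1AtG (W : σ → ℝ) (isX : σ → Prop) (ω : σ → MvPowerSeries σ k) : Prop :=
  ∃ i, isX i ∧ nuG W (ω i) = nu1G W ω ∧ DomAtG W isX (ω i)

/-- A 1-form is `γ`-final dominant. -/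
def FinalDom1G (W : σ → ℝ) (isX : σ → Prop) (γ : ℝ) (ω : σ → MvPowerSeries σ k) : Prop :=
  nu1G W ω ≤ (γ : EReal) ∧ Dom1AtG W isX ω

end Core



abbrev Idx (r n : ℕ) := Sum (Fin r) (Fin n)

/-!
The hypothesis `ν_A(α) = 0` forces the dominant coefficient `α i` to have value `0`, realized by
an `x`-monomial; since all `x`-weights are positive that monomial is `1`, so `α i` is a unit.
Dividing by it, `β - (β_i / α_i) α` has components `(α ∧ β)_{i b} / α_i`, and multiplying by a
power series never lowers the explicit value.
-/

section Value

variable {k : Type} [Field k] {σ : Type} {W : σ → ℝ}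

lemma wtG_add (W : σ → ℝ) (e₁ e₂ : σ →₀ ℕ) : wtG W (e₁ + e₂) = wtG W e₁ + wtG W e₂ := by
  unfold wtG
  rw [Finsupp.sum_add_index' (fun _ => by simp) (fun _ _ _ => by push_cast; ring)]

lemma wtG_nonneg (hW : ∀ i, 0 ≤ W i) (e : σ →₀ ℕ) : 0 ≤ wtG W e :=
  Finset.sum_nonneg fun i _ => mul_nonneg (Nat.cast_nonneg _) (hW i)

lemma wtG_eq_zero_iff (hW : ∀ i, 0 ≤ W i) (e : σ →₀ ℕ) :
    wtG W e = 0 ↔ ∀ i ∈ e.support, W i = 0 := by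
  unfold wtG Finsupp.sum
  rw [Finset.sum_eq_zero_iff_of_nonneg fun i _ => mul_nonneg (Nat.cast_nonneg _) (hW i)]
  refine forall₂_congr fun i hi => ?_
  simp [Finsupp.mem_support_iff.mp hi]

lemma le_nuG_iff {c : EReal} {f : MvPowerSeries σ k} :
    c ≤ nuG W f ↔ ∀ e, coeff e f ≠ 0 → c ≤ (wtG W e : EReal) := by
  simp only [nuG, le_sInf_iff, Set.mem_ofPred_eq]
  exact ⟨fun h e he => h _ ⟨e, he, rfl⟩, by rintro h _ ⟨e, he, rfl⟩; exact h e he⟩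

lemma nuG_nonneg (hW : ∀ i, 0 ≤ W i) (f : MvPowerSeries σ k) : 0 ≤ nuG W f :=
  le_nuG_iff.mpr fun e _ => EReal.coe_nonneg.mpr (wtG_nonneg hW e)

lemma nuG_le_nuG_mul (hW : ∀ i, 0 ≤ W i) (f g : MvPowerSeries σ k) :
    nuG W f ≤ nuG W (f * g) := by
  refine le_nuG_iff.mpr fun e he => ?_
  rw [coeff_mul] at he
  obtain ⟨⟨e₁, e₂⟩, hsum, hne⟩ := Finset.exists_ne_zero_of_sum_ne_zero he
  have hf : coeff e₁ f ≠ 0 := left_ne_zero_of_mul hne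
  have hwt : wtG W e₁ ≤ wtG W e := by
    rw [← Finset.HasAntidiagonal.mem_antidiagonal.mp hsum, wtG_add]
    linarith [wtG_nonneg hW e₂]
  exact (le_nuG_iff.mp le_rfl e₁ hf).trans (EReal.coe_le_coe_iff.mpr hwt)

lemma constantCoeff_ne_zero_of_domAtG {isX : σ → Prop} (hW : ∀ i, 0 ≤ W i)
    (hX : ∀ i, isX i → 0 < W i) {f : MvPowerSeries σ k} (hf : nuG W f ≤ 0)
    (hdom : DomAtG W isX f) : constantCoeff f ≠ 0 := by
  obtain ⟨e, hsupp, hcoeff, hwt⟩ := hdom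
  have hwt0 : wtG W e = 0 :=
    EReal.coe_eq_zero.mp (hwt.trans (le_antisymm hf (nuG_nonneg hW f)))
  have he : e = 0 := by
    ext i
    by_contra hi
    have hWi : W i = 0 := (wtG_eq_zero_iff hW e).mp hwt0 i (Finsupp.mem_support_iff.mpr hi)
    by_cases hXi : isX i
    · exact (hX i hXi).ne' hWi
    · exact hi (hsupp i hXi)
  rwa [he, coeff_zero_eq_constantCoeff_apply] at hcoeff

lemma FinalDom1G.exists_constantCoeff_ne_zero {isX : σ → Prop} (hW : ∀ i, 0 ≤ W i)
    (hX : ∀ i, isX i → 0 < W i) {α : σ → MvPowerSeries σ k} (hα : FinalDom1G W isX 0 α) :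
    ∃ i, constantCoeff (α i) ≠ 0 := by
  obtain ⟨hle, i, -, hval, hdom⟩ := hα
  exact ⟨i, constantCoeff_ne_zero_of_domAtG hW hX (hval.trans_le (mod_cast hle)) hdom⟩

theorem exists_eq_mul_add_of_le_nu2G_wedge (hW : ∀ i, 0 ≤ W i)
    {α β : σ → MvPowerSeries σ k} {i : σ} (hi : constantCoeff (α i) ≠ 0) {ρ : EReal}
    (hβ : ρ ≤ nu2G W (w2G α β)) :
    ∃ (H : MvPowerSeries σ k) (βt : σ → MvPowerSeries σ k),
      ρ ≤ nu1G W βt ∧ ∀ b, β b = H * α b + βt b := by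
  refine ⟨β i * (α i)⁻¹, fun b => β b - β i * (α i)⁻¹ * α b, le_iInf fun b => ?_,
    fun b => by ring⟩
  have hrem : β b - β i * (α i)⁻¹ * α b = w2G α β i b * (α i)⁻¹ := by
    simp only [w2G]
    linear_combination (-β b) * MvPowerSeries.inv_mul_cancel _ hi
  calc ρ ≤ nuG W (w2G α β i b) := hβ.trans ((iInf_le _ i).trans (iInf_le _ b))
    _ ≤ nuG W (β b - β i * (α i)⁻¹ * α b) := hrem ▸ nuG_le_nuG_mul hW _ _

end Value

theorem statement3_general {k : Type} [Field k] {r n : ℕ}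
    (w : Fin r → ℝ) (hw : ∀ i, 0 < w i)
    (α β : Idx r n → MvPowerSeries (Idx r n) k) (ρ : ℝ)
    (hα : FinalDom1G (Sum.elim w fun _ => (0:ℝ)) (fun s => s.isLeft = true) 0 α)
    (hβ : (ρ : EReal) ≤ nu2G (Sum.elim w fun _ => (0:ℝ)) (w2G α β)) :
    ∃ (H : MvPowerSeries (Idx r n) k) (βt : Idx r n → MvPowerSeries (Idx r n) k),
      (ρ : EReal) ≤ nu1G (Sum.elim w fun _ => (0:ℝ)) βt ∧
      ∀ b, β b = H * α b + βt b := by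
  have hW : ∀ s : Idx r n, 0 ≤ Sum.elim w (fun _ => (0:ℝ)) s := by
    rintro (a | b)
    exacts [(hw a).le, le_rfl]
  have hX : ∀ s : Idx r n, s.isLeft = true → 0 < Sum.elim w (fun _ => (0:ℝ)) s := by
    rintro (a | b) h
    exacts [hw a, absurd h (by simp)]
  obtain ⟨i, hi⟩ := hα.exists_constantCoeff_ne_zero hW hX
  exact exists_eq_mul_add_of_le_nu2G_wedge hW hi hβ

/-- truncated De Rham–Saito division: if `α` is a `0`-final dominant
logarithmic 1-form and `ν_A(α ∧ β) ≥ ρ`, then `β = H·α + β̃` with `ν_A(β̃) ≥ ρ`. -/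
theorem statement3 {k : Type} [Field k] [CharZero k] {r n : ℕ} (hr : 0 < r)
    (w : Fin r → ℝ) (hw : ∀ i, 0 < w i) (hind : LinearIndependent ℚ w)
    (α β : Idx r n → MvPowerSeries (Idx r n) k) (ρ : ℝ)
    (hα : FinalDom1G (Sum.elim w fun _ => (0:ℝ)) (fun s => s.isLeft = true) 0 α)
    (hβ : (ρ : EReal) ≤ nu2G (Sum.elim w fun _ => (0:ℝ)) (w2G α β)) :
    ∃ (H : MvPowerSeries (Idx r n) k) (βt : Idx r n → MvPowerSeries (Idx r n) k),
      (ρ : EReal) ≤ nu1G (Sum.elim w fun _ => (0:ℝ)) βt ∧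
      ∀ b, β b = H * α b + βt b :=
  statement3_general w hw α β ρ hα hβ
end
end

section
/- Truncated logarithmic Poincaré lemma: fix μ ∈ k^r and define d_μξ = (Σ_i μ_i·dx_i/x_i) ∧ ξ + dξ on logarithmic forms (on functions, d_μf = f·Σ_i μ_i·dx_i/x_i + df). Let ρ ∈ ℝ ∪ {+∞} (where ν_A(ξ) ≥ +∞ means ξ = 0) and let η be a logarithmic 1-form with ν_A(d_μη) ≥ ρ. Then there exist f ∈ R, λ ∈ k^r, and a logarithmic 1-form η̃ with ν_A(η̃) ≥ ρ such that η = d_μf + x^{−μ}·(Σ_i λ_i·dx_i/x_i) + η̃; moreover λ = 0 unless −μ ∈ ℤ_{≥0}^r (so the middle term, whose coefficients are λ_i·x^{−μ}, is present only when −μ has nonnegative integer entries, in which case x^{−μ} ∈ R is an honest monomial). -/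
noncomputable section
open MvPowerSeries Classical

/-- The constant logarithmic 1-form `Σᵢ μᵢ · dxᵢ/xᵢ`. -/
def cFormM {k : Type} [Field k] {r n : ℕ} (μ : Fin r → k) :
    Idx r n → MvPowerSeries (Idx r n) k :=
  fun b => match b with
  | Sum.inl i => MvPowerSeries.C (σ := Idx r n) (R := k) (μ i)
  | Sum.inr _ => 0

/-- `d_μ f = f·Σ μᵢ dxᵢ/xᵢ + df`. -/
def dMuFn {k : Type} [Field k] {r n : ℕ} (μ : Fin r → k) (f : MvPowerSeries (Idx r n) k) :
    Idx r n → MvPowerSeries (Idx r n) k :=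
  fun b => cFormM μ b * f + DopG (fun s => s.isLeft) b f

/-- `d_μ η = (Σ μᵢ dxᵢ/xᵢ) ∧ η + dη` on 1-forms. -/
def dMu1 {k : Type} [Field k] {r n : ℕ} (μ : Fin r → k)
    (η : Idx r n → MvPowerSeries (Idx r n) k) :
    Idx r n → Idx r n → MvPowerSeries (Idx r n) k :=
  fun a b => w2G (cFormM μ) η a b + dF1G (fun s => s.isLeft) η a b

/-- The monomial `x^m`. -/
def xpowM {k : Type} [Field k] {r n : ℕ} (m : Fin r → ℕ) : MvPowerSeries (Idx r n) k :=
  MvPowerSeries.monomial (R := k) (Finsupp.equivFunOnFinite.symm (Sum.elim m fun _ => 0)) 1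

/-- The logarithmic 1-form `x^m · Σᵢ λᵢ dxᵢ/xᵢ`. -/
def midForm {k : Type} [Field k] {r n : ℕ} (m : Fin r → ℕ) (lam : Fin r → k) :
    Idx r n → MvPowerSeries (Idx r n) k :=
  fun b => match b with
  | Sum.inl i => MvPowerSeries.C (σ := Idx r n) (R := k) (lam i) * xpowM m
  | Sum.inr _ => 0

/-! In the fully logarithmic frame `dz_b/z_b` (`z` running over the `x_i` and the `y_j`) the
twisted differential is diagonal on monomials: `d_μ (x^I y^J) = x^I y^J · Σ_b c_b dz_b/z_b` with
`c = (μ + I, J)`. Hence the `x^I y^J`-coefficient of `d_μ η` is `c ∧ g`, where `g` is the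
`x^I y^J`-coefficient of `η` in that frame. If it vanishes and `c ≠ 0`, then `g = c · g_b / c_b`
for any `b` with `c_b ≠ 0`, so `g` is the coefficient of `d_μ ((g_b / c_b) x^I y^J)`.
In characteristic zero `c = 0` only at `x^{-μ}`, which exists only when `-μ ∈ ℕ^r`; that
monomial is taken care of by the `λ`-term. Since `ν_A` only sees the `x`-exponent, and the frame
change shifts only `y`-exponents, the whole argument can be run monomial by monomial below `ρ`.
-/

section LogPoincare

variable {k : Type} [Field k] {r n : ℕ}

lemma le_nuG_iff_coeff_eq_zero {σ : Type} {W : σ → ℝ} {f : MvPowerSeries σ k} {ρ : EReal} :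
    ρ ≤ nuG W f ↔ ∀ e, ¬ ρ ≤ (wtG W e : EReal) → coeff e f = 0 := by
  simp only [nuG, le_sInf_iff, Set.mem_ofPred_eq, forall_exists_index, and_imp]
  constructor
  · intro h e he
    by_contra hc
    exact he (h _ e hc rfl)
  · rintro h _ e hc rfl
    by_contra he
    exact hc (h e he)

lemma wtG_eq_of_inl_eq (w : Fin r → ℝ) {e e' : Idx r n →₀ ℕ}
    (h : ∀ i, e (Sum.inl i) = e' (Sum.inl i)) :
    wtG (Sum.elim w fun _ => (0:ℝ)) e = wtG (Sum.elim w fun _ => (0:ℝ)) e' := by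
  have hsum : ∀ e : Idx r n →₀ ℕ,
      wtG (Sum.elim w fun _ => (0:ℝ)) e = ∑ i, (e (Sum.inl i) : ℝ) * w i := by
    intro e
    rw [wtG, Finsupp.sum_fintype _ _ (by simp), Fintype.sum_sum_type]
    simp
  simp [hsum, h]

lemma exists_eq_add_single_of_ne_zero {σ : Type} {e : σ →₀ ℕ} {a : σ} (h : e a ≠ 0) :
    ∃ e', e = e' + Finsupp.single a 1 :=
  ⟨_, (tsub_add_cancel_of_le (Finsupp.single_le_iff.mpr (Nat.one_le_iff_ne_zero.mpr h))).symm⟩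

lemma coeff_DopG_inl (i : Fin r) (f : MvPowerSeries (Idx r n) k) (e : Idx r n →₀ ℕ) :
    coeff e (DopG (fun s : Idx r n => s.isLeft) (Sum.inl i) f)
      = (e (Sum.inl i) : k) * coeff e f := by
  rw [coeff_apply]; simp [DopG]

lemma coeff_DopG_inr (j : Fin n) (f : MvPowerSeries (Idx r n) k) (e : Idx r n →₀ ℕ) :
    coeff e (DopG (fun s : Idx r n => s.isLeft) (Sum.inr j) f)
      = ((e (Sum.inr j) : k) + 1) * coeff (e + Finsupp.single (Sum.inr j) 1) f := by
  rw [coeff_apply]; simp [DopG]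

/-- `d_μ (x^e) = x^e · Σ_b dMuScalar μ e b · dz_b/z_b`, with `z_b` running over the `x_i`, `y_j`. -/
def dMuScalar (μ : Fin r → k) (e : Idx r n →₀ ℕ) : Idx r n → k
  | Sum.inl i => μ i + e (Sum.inl i)
  | Sum.inr j => e (Sum.inr j)

/-- The coefficient of `x^e` in `ω` written in the frame `dz_b/z_b`: the `dy_j`-coefficient
is multiplied by `y_j`. -/
def logCoeff (ω : Idx r n → MvPowerSeries (Idx r n) k) (e : Idx r n →₀ ℕ) : Idx r n → k
  | Sum.inl i => coeff e (ω (Sum.inl i))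
  | Sum.inr j =>
    if e (Sum.inr j) = 0 then 0 else coeff (e - Finsupp.single (Sum.inr j) 1) (ω (Sum.inr j))

def xExponent (m : Fin r → ℕ) : Idx r n →₀ ℕ :=
  Finsupp.equivFunOnFinite.symm (Sum.elim m fun _ => 0)

lemma logCoeff_add_single_inr (ω : Idx r n → MvPowerSeries (Idx r n) k) (e : Idx r n →₀ ℕ)
    (j : Fin n) :
    logCoeff ω (e + Finsupp.single (Sum.inr j) 1) (Sum.inr j) = coeff e (ω (Sum.inr j)) := by
  simp [logCoeff]

lemma logCoeff_inr_of_eq_zero (ω : Idx r n → MvPowerSeries (Idx r n) k) {e : Idx r n →₀ ℕ}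
    {j : Fin n} (h : e (Sum.inr j) = 0) : logCoeff ω e (Sum.inr j) = 0 := by
  simp [logCoeff, h]

lemma logCoeff_sub (ω ω' : Idx r n → MvPowerSeries (Idx r n) k) (e : Idx r n →₀ ℕ) :
    logCoeff (ω - ω') e = logCoeff ω e - logCoeff ω' e := by
  funext b
  rcases b with i | j
  · simp [logCoeff]
  · by_cases h : e (Sum.inr j) = 0 <;> simp [logCoeff, h]

lemma logCoeff_dMuFn (μ : Fin r → k) (f : MvPowerSeries (Idx r n) k) (e : Idx r n →₀ ℕ) :
    logCoeff (dMuFn μ f) e = fun b => dMuScalar μ e b * coeff e f := by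
  funext b
  rcases b with i | j
  · simp only [logCoeff, dMuFn, cFormM, map_add, coeff_C_mul, coeff_DopG_inl, dMuScalar]
    ring
  · by_cases h : e (Sum.inr j) = 0
    · simp [logCoeff, dMuScalar, h]
    · obtain ⟨e', rfl⟩ := exists_eq_add_single_of_ne_zero h
      rw [logCoeff_add_single_inr]
      simp [dMuFn, cFormM, coeff_DopG_inr, dMuScalar]

lemma logCoeff_midForm (m : Fin r → ℕ) (lam : Fin r → k) (e : Idx r n →₀ ℕ) :
    logCoeff (midForm m lam) e = if e = xExponent m then Sum.elim lam 0 else 0 := by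
  funext b
  rcases b with i | j
  · have hx : xpowM m = (monomial (xExponent m) 1 : MvPowerSeries (Idx r n) k) := rfl
    by_cases h : e = xExponent m <;> simp [logCoeff, midForm, hx, coeff_monomial, h]
  · by_cases h : e = xExponent m <;> simp [logCoeff, midForm, h]

lemma le_nu1G_of_logCoeff_eq_zero (w : Fin r → ℝ) {ρ : EReal}
    {ω : Idx r n → MvPowerSeries (Idx r n) k}
    (h : ∀ e, ¬ ρ ≤ (wtG (Sum.elim w fun _ => (0:ℝ)) e : EReal) → logCoeff ω e = 0) :
    ρ ≤ nu1G (Sum.elim w fun _ => (0:ℝ)) ω := by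
  refine le_iInf fun b => le_nuG_iff_coeff_eq_zero.mpr fun e he => ?_
  rcases b with i | j
  · exact congrFun (h e he) (Sum.inl i)
  · rw [← logCoeff_add_single_inr]
    refine congrFun (h _ ?_) (Sum.inr j)
    rwa [wtG_eq_of_inl_eq w (e' := e) (by simp)]

section Vanishing

variable (μ : Fin r → k) (η : Idx r n → MvPowerSeries (Idx r n) k) (e : Idx r n →₀ ℕ)

def DMuVanishesAt : Prop :=
  ∀ e' : Idx r n →₀ ℕ, (∀ i, e' (Sum.inl i) = e (Sum.inl i)) →
    ∀ a b, coeff e' (dMu1 μ η a b) = 0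

variable {μ η e}

lemma dMuScalar_mul_logCoeff_inl_inr (h : DMuVanishesAt μ η e) (i : Fin r) (j : Fin n) :
    dMuScalar μ e (Sum.inl i) * logCoeff η e (Sum.inr j)
      = dMuScalar μ e (Sum.inr j) * logCoeff η e (Sum.inl i) := by
  by_cases hj : e (Sum.inr j) = 0
  · simp [logCoeff_inr_of_eq_zero η hj, dMuScalar, hj]
  obtain ⟨e', rfl⟩ := exists_eq_add_single_of_ne_zero hj
  have H := h e' (by simp) (Sum.inl i) (Sum.inr j)
  simp only [dMu1, w2G, dF1G, map_add, map_sub, cFormM, coeff_C_mul, coeff_DopG_inl,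
    coeff_DopG_inr, zero_mul, map_zero] at H
  rw [logCoeff_add_single_inr]
  simp only [dMuScalar, logCoeff, Finsupp.coe_add, Pi.add_apply, ne_eq, reduceCtorEq,
    not_false_eq_true, Finsupp.single_eq_of_ne, add_zero, Finsupp.single_eq_same, Nat.cast_add,
    Nat.cast_one]
  linear_combination H

lemma dMuScalar_mul_logCoeff_inr_inr (h : DMuVanishesAt μ η e) (i j : Fin n) :
    dMuScalar μ e (Sum.inr i) * logCoeff η e (Sum.inr j)
      = dMuScalar μ e (Sum.inr j) * logCoeff η e (Sum.inr i) := by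
  by_cases hij : i = j
  · rw [hij]
  by_cases hi : e (Sum.inr i) = 0
  · simp [logCoeff_inr_of_eq_zero η hi, dMuScalar, hi]
  by_cases hj : e (Sum.inr j) = 0
  · simp [logCoeff_inr_of_eq_zero η hj, dMuScalar, hj]
  obtain ⟨e₁, rfl⟩ := exists_eq_add_single_of_ne_zero hj
  obtain ⟨e₂, rfl⟩ := exists_eq_add_single_of_ne_zero (a := Sum.inr i) (e := e₁)
    (by simpa [Finsupp.single_apply, Ne.symm hij] using hi)
  have H := h e₂ (by simp) (Sum.inr i) (Sum.inr j)
  simp only [dMu1, w2G, dF1G, map_sub, cFormM, coeff_DopG_inr, zero_mul, sub_zero,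
    zero_add] at H
  rw [logCoeff_add_single_inr, add_right_comm, logCoeff_add_single_inr]
  simp only [dMuScalar, Finsupp.coe_add, Pi.add_apply, ne_eq, Sum.inr.injEq, hij, Ne.symm hij,
    not_false_eq_true, Finsupp.single_eq_of_ne, add_zero, Finsupp.single_eq_same, Nat.cast_add,
    Nat.cast_one]
  linear_combination H

lemma dMuScalar_mul_logCoeff_comm (h : DMuVanishesAt μ η e) (a b : Idx r n) :
    dMuScalar μ e a * logCoeff η e b = dMuScalar μ e b * logCoeff η e a := by
  rcases a with i | i <;> rcases b with j | j
  · have H := h e (fun _ => rfl) (Sum.inl i) (Sum.inl j)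
    simp only [dMu1, w2G, dF1G, map_add, map_sub, cFormM, coeff_C_mul, coeff_DopG_inl] at H
    simp only [dMuScalar, logCoeff]
    linear_combination H
  · exact dMuScalar_mul_logCoeff_inl_inr h i j
  · exact (dMuScalar_mul_logCoeff_inl_inr h j i).symm
  · exact dMuScalar_mul_logCoeff_inr_inr h i j

end Vanishing

/-- Away from the resonant monomials (where all of `dMuScalar μ e` vanishes) `d_μ` is invertible
monomial by monomial; the choice of `b` is immaterial on `d_μ`-closed forms. -/
def dMuPrimitive (μ : Fin r → k) (η : Idx r n → MvPowerSeries (Idx r n) k) :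
    MvPowerSeries (Idx r n) k := fun e =>
  if h : ∃ b, dMuScalar μ e b ≠ 0 then logCoeff η e h.choose / dMuScalar μ e h.choose else 0

lemma logCoeff_eq_logCoeff_dMuFn_dMuPrimitive {μ : Fin r → k}
    {η : Idx r n → MvPowerSeries (Idx r n) k} {e : Idx r n →₀ ℕ} (h : DMuVanishesAt μ η e)
    (he : ∃ b, dMuScalar μ e b ≠ 0) :
    logCoeff η e = logCoeff (dMuFn μ (dMuPrimitive μ η)) e := by
  have hb := he.choose_spec
  funext a
  rw [logCoeff_dMuFn, coeff_apply, dMuPrimitive, dif_pos he]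
  field_simp
  linear_combination dMuScalar_mul_logCoeff_comm h he.choose a

lemma dMuScalar_eq_zero_iff [CharZero k] {μ : Fin r → k} {m : Fin r → ℕ}
    (hm : ∀ i, μ i = -(m i : k)) {e : Idx r n →₀ ℕ} :
    dMuScalar μ e = 0 ↔ e = xExponent m := by
  constructor
  · intro h
    ext (i | j)
    · have := congrFun h (Sum.inl i)
      simp only [dMuScalar, hm, Pi.zero_apply] at this
      simpa [xExponent] using (Nat.cast_inj (R := k)).mp (by linear_combination this)
    · simpa [dMuScalar, xExponent] using congrFun h (Sum.inr j)
  · rintro rfl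
    funext b
    rcases b with i | j <;> simp [dMuScalar, xExponent, hm]

lemma exists_logCoeff_midForm [CharZero k] (μ : Fin r → k)
    (η : Idx r n → MvPowerSeries (Idx r n) k) :
    ∃ (m : Fin r → ℕ) (lam : Fin r → k), ((∀ i, μ i = -(m i : k)) ∨ lam = 0) ∧
      ∀ e, logCoeff (midForm m lam) e = if dMuScalar μ e = 0 then logCoeff η e else 0 := by
  by_cases hres : ∃ m : Fin r → ℕ, ∀ i, μ i = -(m i : k)
  · obtain ⟨m, hm⟩ := hres
    refine ⟨m, fun i => coeff (xExponent m) (η (Sum.inl i)), Or.inl hm, fun e => ?_⟩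
    simp only [logCoeff_midForm, dMuScalar_eq_zero_iff hm]
    split_ifs with he
    · subst he
      funext b
      rcases b with i | j
      · rfl
      · simp [logCoeff, xExponent]
    · rfl
  · refine ⟨0, 0, Or.inr rfl, fun e => ?_⟩
    have he : dMuScalar μ e ≠ 0 := fun he =>
      hres ⟨fun i => e (Sum.inl i), fun i => eq_neg_of_add_eq_zero_left (congrFun he (Sum.inl i))⟩
    rw [logCoeff_midForm, if_neg he]
    split_ifs <;> funext b <;> rcases b with i | j <;> rfl

lemma dMuVanishesAt_of_le_nu2G (w : Fin r → ℝ) {μ : Fin r → k}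
    {η : Idx r n → MvPowerSeries (Idx r n) k} {ρ : EReal} {e : Idx r n →₀ ℕ}
    (hint : ρ ≤ nu2G (Sum.elim w fun _ => (0:ℝ)) (dMu1 μ η))
    (he : ¬ ρ ≤ (wtG (Sum.elim w fun _ => (0:ℝ)) e : EReal)) : DMuVanishesAt μ η e := by
  intro e' he' a b
  refine le_nuG_iff_coeff_eq_zero.mp (hint.trans (iInf_le_of_le a (iInf_le _ b))) e' ?_
  rwa [wtG_eq_of_inl_eq w he']

lemma logCoeff_sub_dMuFn_sub_midForm_eq_zero {μ : Fin r → k}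
    {η : Idx r n → MvPowerSeries (Idx r n) k} {m : Fin r → ℕ} {lam : Fin r → k}
    {e : Idx r n →₀ ℕ} (h : DMuVanishesAt μ η e)
    (hmid : ∀ e, logCoeff (midForm m lam) e = if dMuScalar μ e = 0 then logCoeff η e else 0) :
    logCoeff (η - dMuFn μ (dMuPrimitive μ η) - midForm m lam) e = 0 := by
  rw [logCoeff_sub, logCoeff_sub, hmid]
  split_ifs with hres
  · funext b
    simp [logCoeff_dMuFn, hres]
  · rw [← logCoeff_eq_logCoeff_dMuFn_dMuPrimitive h (Function.ne_iff.mp hres)]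
    simp

end LogPoincare

theorem statement4_general {k : Type} [Field k] [CharZero k] {r n : ℕ}
    (w : Fin r → ℝ)
    (μ : Fin r → k) (ρ : EReal)
    (η : Idx r n → MvPowerSeries (Idx r n) k)
    (hint : ρ ≤ nu2G (Sum.elim w fun _ => (0:ℝ)) (dMu1 μ η)) :
    ∃ (f : MvPowerSeries (Idx r n) k) (m : Fin r → ℕ) (lam : Fin r → k)
      (ηt : Idx r n → MvPowerSeries (Idx r n) k),
      ((∀ i, μ i = - ((m i : ℕ) : k)) ∨ lam = 0) ∧
      ρ ≤ nu1G (Sum.elim w fun _ => (0:ℝ)) ηt ∧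
      ∀ b, η b = dMuFn μ f b + midForm m lam b + ηt b := by
  obtain ⟨m, lam, hres, hmid⟩ := exists_logCoeff_midForm μ η
  refine ⟨dMuPrimitive μ η, m, lam, η - dMuFn μ (dMuPrimitive μ η) - midForm m lam, hres, ?_,
    fun b => by simp⟩
  exact le_nu1G_of_logCoeff_eq_zero w fun e he =>
    logCoeff_sub_dMuFn_sub_midForm_eq_zero (dMuVanishesAt_of_le_nu2G w hint he) hmid

/-- truncated logarithmic Poincaré lemma: if `ν_A(d_μ η) ≥ ρ` then
`η = d_μ f + x^{−μ}·(Σ λᵢ dxᵢ/xᵢ) + η̃` with `ν_A(η̃) ≥ ρ`, where `λ = 0` unless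
`−μ ∈ ℤ_{≥0}^r`. -/
theorem statement4 {k : Type} [Field k] [CharZero k] {r n : ℕ} (hr : 0 < r)
    (w : Fin r → ℝ) (hw : ∀ i, 0 < w i) (hind : LinearIndependent ℚ w)
    (μ : Fin r → k) (ρ : EReal) (hρ : ρ ≠ ⊥)
    (η : Idx r n → MvPowerSeries (Idx r n) k)
    (hint : ρ ≤ nu2G (Sum.elim w fun _ => (0:ℝ)) (dMu1 μ η)) :
    ∃ (f : MvPowerSeries (Idx r n) k) (m : Fin r → ℕ) (lam : Fin r → k)
      (ηt : Idx r n → MvPowerSeries (Idx r n) k),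
      ((∀ i, μ i = - ((m i : ℕ) : k)) ∨ lam = 0) ∧
      ρ ≤ nu1G (Sum.elim w fun _ => (0:ℝ)) ηt ∧
      ∀ b, η b = dMuFn μ f b + midForm m lam b + ηt b :=
  statement4_general w μ ρ η hint
end
end
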